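/- Let e_1, …, e_{2mn} be a Majorana family of 2mn operators on ℂ^{2^{mn}} (n ≥ 2). For 1 ≤ k ≠ l ≤ n define Γ^{k,l} = Σ_{j=1}^{2m} (−1)^{m−j} · e_{2m(k−1)+j} · e_{2m(l−1)+1}⋯e_{2m(l−1)+j−1}·e_{2m(l−1)+j+1}⋯e_{2ml}, and let C = i^{mn} e_1⋯e_{2mn}. If a matrix ρ satisfies Γ^{k,l} ρ = 0 for all k ≠ l, then the matrix ρ̃ = (1/2)(ρ + C ρ C) satisfies Γ^{k,l} ρ̃ = 0 for all k ≠ l, and ρ̃ is even, i.e., it lies in the complex span of the identity and the products of an even number of distinct operators e_j. -/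

import Mathlib

open Matrix Kronecker Finset
open scoped ComplexOrder

noncomputable section

/-- A Majorana family: `2*m` Hermitian `2^m × 2^m` complex matrices squaring to the
identity and pairwise anticommuting. -/
structure MajoranaFamily (m : ℕ) where
  c : Fin (2*m) → Matrix (Fin (2^m)) (Fin (2^m)) ℂ
  herm : ∀ j, (c j).IsHermitian
  sq : ∀ j, c j * c j = 1
  anticomm : ∀ j k, j ≠ k → c j * c k = -(c k * c j)

abbrev Mat (m : ℕ) := Matrix (Fin (2^m)) (Fin (2^m)) ℂ
abbrev Mat2 (m : ℕ) := Matrix (Fin (2^m) × Fin (2^m)) (Fin (2^m) × Fin (2^m)) ℂ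
abbrev MatN (m n : ℕ) := Matrix (Fin n → Fin (2^m)) (Fin n → Fin (2^m)) ℂ

variable {m : ℕ}

/-- A state: a positive semidefinite matrix of trace `1`. -/
def IsState {ι : Type*} [Fintype ι] (ρ : Matrix ι ι ℂ) : Prop :=
  ρ.PosSemidef ∧ ρ.trace = 1

/-- The trace norm `‖X‖₁ = Tr √(XᴴX)`. -/
def traceNorm {ι : Type*} [Fintype ι] [DecidableEq ι] (X : Matrix ι ι ℂ) : ℝ :=
  (((Matrix.posSemidef_conjTranspose_mul_self X).1.eigenvectorUnitary.1 *
    diagonal (fun i => ((Real.sqrt ((Matrix.posSemidef_conjTranspose_mul_self X).1.eigenvalues i) : ℝ) : ℂ)) *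
    (star (Matrix.posSemidef_conjTranspose_mul_self X).1.eigenvectorUnitary : Matrix ι ι ℂ)).trace).re

/-- The rotated Majorana operators `c̃_j = Σ_i R_{ij} c_i`. -/
def tilde (F : MajoranaFamily m) (R : Matrix (Fin (2*m)) (Fin (2*m)) ℝ)
    (j : Fin (2*m)) : Mat m :=
  ∑ i, (R i j : ℂ) • F.c i

/-- Standard-form Gaussian state `2^{-m} ∏_{k=1}^m (I + i λ_k c̃_{2k-1} c̃_{2k})`
(ordered product; the factors commute). -/
def gaussStd (F : MajoranaFamily m) (R : Matrix (Fin (2*m)) (Fin (2*m)) ℝ)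
    (lam : Fin m → ℝ) : Mat m :=
  ((2:ℂ)^m)⁻¹ • (List.ofFn (fun k : Fin m =>
    (1 : Mat m) + (Complex.I * (lam k : ℂ)) •
      (tilde F R ⟨2*k.val, by omega⟩ * tilde F R ⟨2*k.val+1, by omega⟩))).prod

/-- A pure Gaussian state: a standard-form Gaussian state with all `λ_k ∈ {-1,1}`,
for some `R ∈ SO(2m,ℝ)`. -/
def IsPureGaussian (F : MajoranaFamily m) (ρ : Mat m) : Prop :=
  ∃ (R : Matrix (Fin (2*m)) (Fin (2*m)) ℝ) (lam : Fin m → ℝ),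
    Rᵀ * R = 1 ∧ R.det = 1 ∧ (∀ k, lam k = 1 ∨ lam k = -1) ∧ ρ = gaussStd F R lam

/-- A convex-Gaussian state: a finite convex combination of pure Gaussian states. -/
def IsConvexGaussian (F : MajoranaFamily m) (ρ : Mat m) : Prop :=
  ∃ (k : ℕ) (p : Fin k → ℝ) (g : Fin k → Mat m),
    (∀ i, 0 ≤ p i) ∧ (∑ i, p i) = 1 ∧ (∀ i, IsPureGaussian F (g i)) ∧
    ρ = ∑ i, p i • g i

/-- `Λ = Σ_j c_j ⊗ c_j` on `ℂ^N ⊗ ℂ^N`. -/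
def Lambda (F : MajoranaFamily m) : Mat2 m := ∑ j, F.c j ⊗ₖ F.c j

/-- Ordered product `c_{a_1} ⋯ c_{a_r}` over a finite set `S = {a_1 < … < a_r}`. -/
def majProd (F : MajoranaFamily m) (S : Finset (Fin (2*m))) : Mat m :=
  ((S.sort (· ≤ ·)).map F.c).prod

/-- An even operator: a complex linear combination of the identity and products of
an even number of distinct Majorana operators. -/
def IsEven (F : MajoranaFamily m) (X : Mat m) : Prop :=
  X ∈ Submodule.span ℂ {Y : Mat m | ∃ S : Finset (Fin (2*m)), Even S.card ∧ Y = majProd F S}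

/-- The Hermitian correlator `i^k c_{a_1} ⋯ c_{a_{2k}}` associated to a set of
cardinality `2k`. -/
def corrOp (F : MajoranaFamily m) (S : Finset (Fin (2*m))) : Mat m :=
  (Complex.I ^ (S.card / 2)) • majProd F S

/-- The operator acting as `A` on the `k`-th tensor factor of `(ℂ^N)^{⊗n}` and as the
identity on the other factors. -/
def embedAt (n : ℕ) (k : Fin n) (A : Mat m) : MatN m n :=
  fun x y => A (x k) (y k) * ∏ l ∈ Finset.univ.erase k, (if x l = y l then 1 else 0)

/-- `Λ^{k,l} = Σ_j c_j^{(k)} c_j^{(l)}` on `(ℂ^N)^{⊗n}`. -/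
def LambdaKL (F : MajoranaFamily m) (n : ℕ) (k l : Fin n) : MatN m n :=
  ∑ j, embedAt n k (F.c j) * embedAt n l (F.c j)

/-- Partial trace of an operator on `(ℂ^N)^{⊗n}` over the tensor factors `2, …, n`. -/
def ptrRest (n : ℕ) (hn : 1 ≤ n) (ρ : MatN m n) : Mat m := fun a b =>
  ∑ g : Fin (n-1) → Fin (2^m),
    ρ (fun i => if h : i.val = 0 then a else g ⟨i.val - 1, by omega⟩)
      (fun i => if h : i.val = 0 then b else g ⟨i.val - 1, by omega⟩)

/-- `ρ` has an `n`-Gaussian-symmetric extension. -/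
def HasGSExt (F : MajoranaFamily m) (n : ℕ) (hn : 1 ≤ n) (ρ : Mat m) : Prop :=
  ∃ ext : MatN m n, IsState ext ∧ ptrRest n hn ext = ρ ∧
    ∀ k l : Fin n, k ≠ l → LambdaKL F n k l * ext = 0

/-- `‖Λ‖₁ = 2(m+1) C(2m, m+1)`. -/
def lambdaNorm (m : ℕ) : ℝ := 2*(m+1) * (Nat.choose (2*m) (m+1) : ℝ)

/-- `ε(n) = min {2, 10 ‖Λ‖₁² 2^{2m} n^{-1/3}}`. -/
def epsB (m n : ℕ) : ℝ :=
  min 2 (10 * lambdaNorm m ^ 2 * 2^(2*m) / (n:ℝ) ^ ((1:ℝ)/3))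

/-- `χ(n) = (ε(n)/2) (2m)!/m!`. -/
def chiB (m n : ℕ) : ℝ :=
  epsB m n / 2 * ((Nat.factorial (2*m) : ℝ) / (Nat.factorial m : ℝ))

/-- `δ(n) = χ(n)/(1+χ(n))`. -/
def deltaB (m n : ℕ) : ℝ := chiB m n / (1 + chiB m n)

/-- The parity operator `P = i^m c_1 ⋯ c_{2m}`. -/
def parityOp (F : MajoranaFamily m) : Mat m :=
  (Complex.I ^ m) • (((List.finRange (2*m)).map F.c).prod)

/-- The operator `I^{⊗ r} ⊗ c_s ⊗ P^{⊗(n-r-1)}` on `(ℂ^N)^{⊗n}` (0-based position `r`). -/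
def dOp (F : MajoranaFamily m) (n : ℕ) (r : Fin n) (s : Fin (2*m)) : MatN m n :=
  fun x y => ∏ l : Fin n,
    if l < r then (if x l = y l then 1 else 0)
    else if l = r then F.c s (x l) (y l)
    else parityOp F (x l) (y l)

/-- The family `d_1, …, d_{2mn}`, where `d_{2m(r-1)+s} = I^{⊗(r-1)} ⊗ c_s ⊗ P^{⊗(n-r)}`. -/
def dAll (hm : 1 ≤ m) (F : MajoranaFamily m) (n : ℕ) (j : Fin (2*(m*n))) : MatN m n :=
  dOp F n
    ⟨j.val / (2*m), by
      have h1 := j.isLt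
      rw [Nat.div_lt_iff_lt_mul (by omega)]
      have h2 : n * (2*m) = 2*(m*n) := by ring
      omega⟩
    ⟨j.val % (2*m), Nat.mod_lt _ (by omega)⟩

/-- The index `2m(k-1)+j` (0-based: `2mk + j`) into a family of `2mn` Majorana operators. -/
def bigIdx (m n : ℕ) (k : Fin n) (j : Fin (2*m)) : Fin (2*(m*n)) :=
  ⟨2*m*k.val + j.val, by
    have hk : k.val + 1 ≤ n := k.isLt
    have hj := j.isLt
    have h1 : 2*m*(k.val+1) = 2*m*k.val + 2*m := by ring
    have h2 : 2*m*(k.val+1) ≤ 2*m*n := Nat.mul_le_mul le_rfl hk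
    have h3 : 2*m*n = 2*(m*n) := by ring
    omega⟩

/-- `Γ^{k,l} = Σ_{j=1}^{2m} (-1)^{m-j} e_{2m(k-1)+j} · e_{2m(l-1)+1} ⋯ ê_{2m(l-1)+j} ⋯ e_{2ml}`. -/
def GammaKL (m n : ℕ) (E : MajoranaFamily (m*n)) (k l : Fin n) :
    Matrix (Fin (2^(m*n))) (Fin (2^(m*n))) ℂ :=
  ∑ j : Fin (2*m), ((-1:ℂ) ^ ((m:ℤ) - (j.val+1 : ℤ))) •
    (E.c (bigIdx m n k j) *
      (((List.finRange (2*m)).filter (fun i => i ≠ j)).map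
        (fun i => E.c (bigIdx m n l i))).prod)

/-- `C = i^{mn} e_1 ⋯ e_{2mn}`. -/
def bigParity (m n : ℕ) (E : MajoranaFamily (m*n)) :
    Matrix (Fin (2^(m*n))) (Fin (2^(m*n))) ℂ :=
  (Complex.I ^ (m*n)) • (((List.finRange (2*(m*n))).map E.c).prod)

/-- The `n`-fold tensor power `A^{⊗n}` of a matrix on `ℂ^N`. -/
def tpow (n : ℕ) (A : Mat m) : MatN m n := fun x y => ∏ k, A (x k) (y k)

/-!
`C` is a multiple of the product of all `2mn` generators, so it anticommutes with each `e_j`,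
hence commutes with every product of an even number of them (in particular with `Γ^{k,l}`),
and `C² = 1`; thus `Γ^{k,l} C ρ C = C Γ^{k,l} ρ C = 0`. For evenness, the `2^{2mn}` ordered
monomials `e_S` are orthogonal for the trace pairing (for `S ≠ T`, some `e_j` anticommutes with
`e_S e_T`, which is therefore traceless), so they form a basis of all matrices. Conjugation by
`C` multiplies `e_S` by `(-1)^|S|`, so `ρ ↦ (ρ + C ρ C)/2` keeps the even monomials of `ρ` and
kills the odd ones.
-/

theorem List.mul_prod_map_eq_neg_one_pow_countP_mul {ι R : Type*} [Ring R] (f : ι → R)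
    (x : R) (p : ι → Bool) (L : List ι)
    (hp : ∀ i ∈ L, p i → x * f i = -(f i * x))
    (hnp : ∀ i ∈ L, ¬ p i → x * f i = f i * x) :
    x * (L.map f).prod = (-1) ^ L.countP p * ((L.map f).prod * x) := by
  induction L with
  | nil => simp
  | cons a t ih =>
    have ih := ih (fun i hi => hp i (List.mem_cons_of_mem a hi))
      (fun i hi => hnp i (List.mem_cons_of_mem a hi))
    have hsign := ((Commute.neg_one_right (f a)).pow_right (t.countP p)).left_comm
    by_cases ha : p a
    · calc x * ((a :: t).map f).prod = -(f a * (x * (t.map f).prod)) := by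
            simp [← mul_assoc, hp a List.mem_cons_self ha]
        _ = (-1) ^ (a :: t).countP p * (((a :: t).map f).prod * x) := by
            simp [ih, ha, pow_succ, mul_assoc, hsign]
    · calc x * ((a :: t).map f).prod = f a * (x * (t.map f).prod) := by
            simp [← mul_assoc, hnp a List.mem_cons_self ha]
        _ = (-1) ^ (a :: t).countP p * (((a :: t).map f).prod * x) := by
            simp [ih, ha, mul_assoc, hsign]

open scoped symmDiff

theorem Finset.countP_sort_ne {α : Type*} [LinearOrder α] (S : Finset α) (j : α) :
    (S.sort (· ≤ ·)).countP (· ≠ j) = (S.erase j).card := by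
  rw [List.countP_eq_length_filter, ← List.toFinset_card_of_nodup ((S.sort_nodup _).filter _),
    List.toFinset_filter, Finset.sort_toFinset, ← Finset.filter_ne']
  simp

theorem Finset.exists_odd_card_erase_add_card_erase {α : Type*} [Fintype α] [DecidableEq α]
    (hα : Even (Fintype.card α)) {S T : Finset α} (h : S ≠ T) :
    ∃ j, Odd ((S.erase j).card + (T.erase j).card) := by
  by_cases hpar : Even (S.card + T.card)
  · obtain ⟨j, hj⟩ : (S ∆ T).Nonempty :=
      Finset.nonempty_iff_ne_empty.mpr (fun h' => h (symmDiff_eq_bot.mp h'))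
    refine ⟨j, ?_⟩
    rw [Nat.even_iff] at hpar
    rw [Nat.odd_iff]
    rcases Finset.mem_symmDiff.mp hj with ⟨hS, hT⟩ | ⟨hT, hS⟩
    · rw [← Finset.card_erase_add_one hS] at hpar
      rw [Finset.erase_eq_of_notMem hT]; omega
    · rw [← Finset.card_erase_add_one hT] at hpar
      rw [Finset.erase_eq_of_notMem hS]; omega
  rw [Nat.not_even_iff_odd] at hpar
  by_cases hout : ∃ j, j ∉ S ∧ j ∉ T
  · obtain ⟨j, hS, hT⟩ := hout
    exact ⟨j, by rwa [Finset.erase_eq_of_notMem hS, Finset.erase_eq_of_notMem hT]⟩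
  by_cases hin : ∃ j, j ∈ S ∧ j ∈ T
  · obtain ⟨j, hS, hT⟩ := hin
    refine ⟨j, ?_⟩
    rw [← Finset.card_erase_add_one hS, ← Finset.card_erase_add_one hT] at hpar
    rw [Nat.odd_iff] at hpar ⊢; omega
  -- otherwise `S` and `T` are complementary, so `#S + #T = card α` is even
  push Not at hout hin
  have hST : Disjoint S T := Finset.disjoint_left.mpr hin
  have hcov : S ∪ T = Finset.univ := Finset.eq_univ_of_forall fun j => by
    by_cases hj : j ∈ S
    · exact Finset.mem_union_left T hj
    · exact Finset.mem_union_right S (hout j hj)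
  rw [← Finset.card_union_of_disjoint hST, hcov, Finset.card_univ] at hpar
  exact absurd hα (Nat.not_even_iff_odd.mpr hpar)

section Majorana

variable {q : ℕ} (F : MajoranaFamily q)

theorem MajoranaFamily.c_mul_prod_map (j : Fin (2*q)) (L : List (Fin (2*q))) :
    F.c j * (L.map F.c).prod = (-1) ^ L.countP (· ≠ j) * ((L.map F.c).prod * F.c j) :=
  L.mul_prod_map_eq_neg_one_pow_countP_mul F.c _ _
    (fun i _ hi => F.anticomm j i (of_decide_eq_true hi).symm)
    (fun i _ hi => by rw [show i = j by simpa using hi])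

theorem MajoranaFamily.prod_map_mul_self (L : List (Fin (2*q))) (hL : L.Nodup) :
    (L.map F.c).prod * (L.map F.c).prod = (-1) ^ L.length.choose 2 := by
  induction L with
  | nil => simp
  | cons a t ih =>
    obtain ⟨hat, ht⟩ := List.nodup_cons.mp hL
    have hcount : t.countP (· ≠ a) = t.length :=
      List.countP_eq_length.mpr (fun i hi => by simpa using ne_of_mem_of_not_mem hi hat)
    have hswap := F.c_mul_prod_map a t
    rw [hcount] at hswap
    have hchoose : t.length + t.length.choose 2 = (t.length + 1).choose 2 := by
      rw [Nat.choose_succ_succ', Nat.choose_one_right]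
    simp only [List.map_cons, List.prod_cons, List.length_cons]
    calc F.c a * (t.map F.c).prod * (F.c a * (t.map F.c).prod)
        = (F.c a * (t.map F.c).prod) * F.c a * (t.map F.c).prod := by simp only [mul_assoc]
      _ = (-1) ^ t.length * ((t.map F.c).prod * (t.map F.c).prod) := by
        rw [hswap]; simp only [mul_assoc, F.sq, one_mul]
      _ = (-1) ^ (t.length + 1).choose 2 := by rw [ih ht, ← pow_add, hchoose]

theorem c_mul_majProd (j : Fin (2*q)) (S : Finset (Fin (2*q))) :
    F.c j * majProd F S = (-1) ^ (S.erase j).card * (majProd F S * F.c j) := by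
  rw [majProd, F.c_mul_prod_map, Finset.countP_sort_ne]

theorem majProd_mul_self (S : Finset (Fin (2*q))) :
    majProd F S * majProd F S = (-1) ^ S.card.choose 2 := by
  rw [majProd, F.prod_map_mul_self _ (S.sort_nodup _), Finset.length_sort]

theorem trace_eq_zero_of_c_mul_eq_neg (j : Fin (2*q)) {X : Mat q}
    (h : F.c j * X = -(X * F.c j)) : X.trace = 0 := by
  have h1 : X.trace = -X.trace :=
    calc X.trace = ((F.c j * X) * F.c j).trace := by
          rw [← Matrix.trace_mul_comm, ← mul_assoc, F.sq, one_mul]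
      _ = -X.trace := by rw [h, neg_mul, Matrix.trace_neg, mul_assoc, F.sq, mul_one]
  linear_combination h1 / 2

theorem trace_majProd_mul_majProd_of_ne {S T : Finset (Fin (2*q))} (h : S ≠ T) :
    (majProd F S * majProd F T).trace = 0 := by
  obtain ⟨j, hj⟩ := Finset.exists_odd_card_erase_add_card_erase (by simp) h
  apply trace_eq_zero_of_c_mul_eq_neg F j
  calc F.c j * (majProd F S * majProd F T)
      = (-1) ^ ((S.erase j).card + (T.erase j).card) * (majProd F S * majProd F T * F.c j) := by
        rw [← mul_assoc, c_mul_majProd, mul_assoc, mul_assoc, c_mul_majProd,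
          ((Commute.neg_one_right _).pow_right _).left_comm, pow_add]
        simp only [mul_assoc]
    _ = -(majProd F S * majProd F T * F.c j) := by rw [hj.neg_one_pow, neg_one_mul]

theorem trace_majProd_mul_self_ne_zero (S : Finset (Fin (2*q))) :
    (majProd F S * majProd F S).trace ≠ 0 := by
  rw [majProd_mul_self]
  rcases neg_one_pow_eq_or (Mat q) (S.card.choose 2) with h | h <;> simp [h]

theorem linearIndependent_majProd : LinearIndependent ℂ (majProd F) := by
  rw [Fintype.linearIndependent_iff]
  intro g hg T
  have htrace : (majProd F T * ∑ S, g S • majProd F S).trace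
      = g T * (majProd F T * majProd F T).trace := by
    rw [Matrix.mul_sum, Matrix.trace_sum, Finset.sum_eq_single T]
    · rw [Matrix.mul_smul, Matrix.trace_smul, smul_eq_mul]
    · intro S _ hST
      rw [Matrix.mul_smul, Matrix.trace_smul, trace_majProd_mul_majProd_of_ne F (Ne.symm hST),
        smul_zero]
    · simp
  rw [hg, mul_zero, Matrix.trace_zero, eq_comm] at htrace
  exact (mul_eq_zero.mp htrace).resolve_right (trace_majProd_mul_self_ne_zero F T)

theorem span_majProd_eq_top : Submodule.span ℂ (Set.range (majProd F)) = ⊤ := by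
  apply (linearIndependent_majProd F).span_eq_top_of_card_eq_finrank
  rw [Fintype.card_finset, Module.finrank_matrix, Module.finrank_self]
  simp [two_mul, pow_add]

theorem parityOp_eq_smul_majProd_univ : parityOp F = Complex.I ^ q • majProd F Finset.univ := by
  rw [parityOp, majProd, Fin.sort_univ]

theorem c_mul_parityOp (j : Fin (2*q)) : F.c j * parityOp F = -(parityOp F * F.c j) := by
  have hodd : Odd (Finset.univ.erase j).card := by
    rw [Finset.card_erase_of_mem (Finset.mem_univ j), Finset.card_univ, Fintype.card_fin]
    exact ⟨q - 1, by have := j.isLt; omega⟩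
  rw [parityOp_eq_smul_majProd_univ, mul_smul_comm, c_mul_majProd, hodd.neg_one_pow,
    neg_one_mul, smul_mul_assoc, smul_neg]

theorem parityOp_mul_prod_map (L : List (Fin (2*q))) :
    parityOp F * (L.map F.c).prod = (-1) ^ L.length * ((L.map F.c).prod * parityOp F) := by
  simpa using L.mul_prod_map_eq_neg_one_pow_countP_mul F.c (parityOp F) (fun _ => true)
    (fun i _ _ => by rw [c_mul_parityOp, neg_neg]) (by simp)

theorem parityOp_mul_self : parityOp F * parityOp F = 1 := by
  have hchoose : Even (q + (2 * q).choose 2) := by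
    rw [Nat.choose_two_right, mul_assoc, Nat.mul_div_cancel_left _ two_pos]
    rcases q with _ | q
    · simp
    · exact ⟨(q + 1) * (q + 1), by rw [show 2 * (q + 1) - 1 = 2 * q + 1 by omega]; ring⟩
  rw [parityOp_eq_smul_majProd_univ, smul_mul_smul_comm, majProd_mul_self, ← mul_pow,
    Complex.I_mul_I, Finset.card_univ, Fintype.card_fin, ← neg_one_smul ℂ (1 : Mat q),
    smul_pow, one_pow, smul_smul, ← pow_add, hchoose.neg_one_pow, one_smul]

theorem parityOp_mul_majProd_mul_parityOp (S : Finset (Fin (2*q))) :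
    parityOp F * majProd F S * parityOp F = (-1) ^ S.card * majProd F S := by
  rw [majProd, parityOp_mul_prod_map, mul_assoc, mul_assoc, parityOp_mul_self, mul_one,
    Finset.length_sort]

theorem isEven_half_smul_add_parityOp_conj (X : Mat q) :
    IsEven F ((1/2 : ℂ) • (X + parityOp F * X * parityOp F)) := by
  have hX : X ∈ Submodule.span ℂ (Set.range (majProd F)) := by
    simp [span_majProd_eq_top]
  unfold IsEven
  induction hX using Submodule.span_induction with
  | mem _ hx =>
    obtain ⟨S, rfl⟩ := hx
    rw [parityOp_mul_majProd_mul_parityOp]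
    rcases Nat.even_or_odd S.card with hS | hS
    · rw [hS.neg_one_pow, one_mul, ← two_smul ℂ, smul_smul]
      norm_num
      exact Submodule.subset_span ⟨S, hS, rfl⟩
    · rw [hS.neg_one_pow, neg_one_mul, add_neg_cancel, smul_zero]
      exact zero_mem _
  | zero => simp
  | add X Y _ _ hX hY =>
    convert add_mem hX hY using 1
    simp only [mul_add, add_mul, smul_add]
    abel
  | smul a X _ hX =>
    convert Submodule.smul_mem _ a hX using 1
    simp only [Matrix.mul_smul, Matrix.smul_mul, smul_add, smul_comm a]

end Majorana

theorem commute_parityOp_GammaKL (m n : ℕ) (E : MajoranaFamily (m*n)) (k l : Fin n) :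
    Commute (parityOp E) (GammaKL m n E k l) := by
  refine Commute.sum_right _ _ _ (fun j _ => Commute.smul_right ?_ _)
  set L := (List.finRange (2*m)).filter (fun i => i ≠ j) with hL
  have hlen : L.length = 2 * m - 1 := by
    rw [hL, ← Fin.sort_univ, ← List.countP_eq_length_filter, Finset.countP_sort_ne,
      Finset.card_erase_of_mem (Finset.mem_univ j), Finset.card_univ, Fintype.card_fin]
  have hterm : E.c (bigIdx m n k j) * (L.map fun i => E.c (bigIdx m n l i)).prod
      = ((bigIdx m n k j :: L.map (bigIdx m n l)).map E.c).prod := by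
    simp [Function.comp_def]
  have heven : Even (bigIdx m n k j :: L.map (bigIdx m n l)).length :=
    ⟨m, by rw [List.length_cons, List.length_map, hlen]; have := j.isLt; omega⟩
  rw [hterm, Commute, SemiconjBy, parityOp_mul_prod_map, heven.neg_one_pow, one_mul]

theorem stmt_18_general (m n : ℕ) (E : MajoranaFamily (m*n))
    (ρ : Matrix (Fin (2^(m*n))) (Fin (2^(m*n))) ℂ)
    (hρ : ∀ k l : Fin n, k ≠ l → GammaKL m n E k l * ρ = 0) :
    (∀ k l : Fin n, k ≠ l →
      GammaKL m n E k l *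
        ((1/2 : ℂ) • (ρ + bigParity m n E * ρ * bigParity m n E)) = 0) ∧
    IsEven E ((1/2 : ℂ) • (ρ + bigParity m n E * ρ * bigParity m n E)) := by
  have hC : bigParity m n E = parityOp E := rfl
  refine ⟨fun k l hkl => ?_, hC ▸ isEven_half_smul_add_parityOp_conj E ρ⟩
  rw [hC, mul_smul_comm, mul_add, hρ k l hkl, ← mul_assoc, ← mul_assoc,
    (commute_parityOp_GammaKL m n E k l).eq.symm, mul_assoc _ _ ρ, hρ k l hkl]
  simp

/-- If `Γ^{k,l} ρ = 0` for all `k ≠ l`, then `ρ̃ = (ρ + C ρ C)/2` also satisfies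
`Γ^{k,l} ρ̃ = 0` for all `k ≠ l`, and `ρ̃` is even. -/
theorem stmt_18 (m n : ℕ) (hm : 1 ≤ m) (hn : 2 ≤ n) (E : MajoranaFamily (m*n))
    (ρ : Matrix (Fin (2^(m*n))) (Fin (2^(m*n))) ℂ)
    (hρ : ∀ k l : Fin n, k ≠ l → GammaKL m n E k l * ρ = 0) :
    (∀ k l : Fin n, k ≠ l →
      GammaKL m n E k l *
        ((1/2 : ℂ) • (ρ + bigParity m n E * ρ * bigParity m n E)) = 0) ∧
    IsEven E ((1/2 : ℂ) • (ρ + bigParity m n E * ρ * bigParity m n E)) :=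
  stmt_18_general m n E ρ hρ

end
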